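/- arXiv:0711.0269 — 2 statements merged into one kernel-verified Lean document; each statement's English description precedes it below -/
import Mathlib

section
/- For λ > μ ≥ 0, t > 0 and σ ∈ (0,1), with f = f(σ,t) = (λ-μ)(1-e^{-(λ-μ)σt}) e^{-(λ-μ)(1-σ)t}/((1-e^{-(λ-μ)(1-σ)t})(λ-μe^{-(λ-μ)t})), the series ∑_{n=1}^{∞} (1 + n f)/(1 + f) · λ^{n-1}(λ-μ) e^{-(λ-μ)t}(1 - e^{-(λ-μ)t})^{n-1}/(λ - μ e^{-(λ-μ)t})^{n} converges and equals e^{(λ-μ)σt} (λ - μ e^{-(λ-μ)t})/(λ - μ e^{-(λ-μ)(1-σ)t}). -/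
/-!
Conditioned on survival, the number of tips at time `t` is geometric: the weight of `k + 1` tips
is `(1 - r) r ^ k` with `r = λ (1 - e^{-(λ-μ)t}) / (λ - μ e^{-(λ-μ)t})`. The summand is affine in
`k`, so the series is `1 + f / (1 - r)` divided by `1 + f`, by the geometric series and its
derivative. Writing `a = e^{-(λ-μ)σt}` and `b = e^{-(λ-μ)(1-σ)t}`, so that `e^{-(λ-μ)t} = a b`,
both `1 + f / (1 - r)` and `1 + f` factor through `1 - a b`, which cancels.
-/

open Real Set

theorem hasSum_affine_mul_geometric {𝕜 : Type*} [NormedField 𝕜] [CompleteSpace 𝕜] {r : 𝕜}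
    (hr : ‖r‖ < 1) (c d : 𝕜) :
    HasSum (fun k : ℕ => (c + ((k : 𝕜) + 1) * d) * ((1 - r) * r ^ k)) (c + d / (1 - r)) := by
  have h1r : 1 - r ≠ 0 := sub_ne_zero.mpr fun h => by simp [← h] at hr
  have hsucc : HasSum (fun k : ℕ => ((k : 𝕜) + 1) * r ^ k) (1 / (1 - r) ^ 2) := by
    simpa using hasSum_choose_mul_geometric_of_norm_lt_one 1 hr
  have hterm : (fun k : ℕ => (c + ((k : 𝕜) + 1) * d) * ((1 - r) * r ^ k))
      = fun k : ℕ => c * (1 - r) * r ^ k + d * (1 - r) * (((k : 𝕜) + 1) * r ^ k) := by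
    funext k
    ring
  have hsum : c + d / (1 - r) = c * (1 - r) * (1 - r)⁻¹ + d * (1 - r) * (1 / (1 - r) ^ 2) := by
    field_simp
  rw [hterm, hsum]
  exact ((hasSum_geometric_of_norm_lt_one hr).mul_left _).add (hsucc.mul_left _)

section BirthDeath

variable {K : Type*} [Field K] {lam mu : K}

theorem one_sub_birthDeath_ratio {E : K} (hD : lam - mu * E ≠ 0) :
    1 - lam * (1 - E) / (lam - mu * E) = (lam - mu) * E / (lam - mu * E) := by
  rw [one_sub_div hD]
  ring

theorem birthDeath_weight_eq_geometric {E : K} (hD : lam - mu * E ≠ 0) (k : ℕ) :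
    lam ^ k * (lam - mu) * E * (1 - E) ^ k / (lam - mu * E) ^ (k + 1)
      = (1 - lam * (1 - E) / (lam - mu * E)) * (lam * (1 - E) / (lam - mu * E)) ^ k := by
  rw [one_sub_birthDeath_ratio hD, div_pow, mul_pow, pow_succ, div_mul_div_comm]
  ring

theorem expected_lineages_closedForm {a b : K} (hd : lam - mu ≠ 0) (ha : a ≠ 0)
    (hb : b ≠ 0) (h1b : 1 - b ≠ 0) (h1ab : 1 - a * b ≠ 0) (hD : lam - mu * (a * b) ≠ 0)
    (hDb : lam - mu * b ≠ 0) :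
    let f : K := (lam - mu) * (1 - a) * b / ((1 - b) * (lam - mu * (a * b)))
    (1 + f / ((lam - mu) * (a * b) / (lam - mu * (a * b)))) / (1 + f)
      = a⁻¹ * (lam - mu * (a * b)) / (lam - mu * b) := by
  intro f
  have h1f : 1 + f = (1 - a * b) * (lam - mu * b) / ((1 - b) * (lam - mu * (a * b))) := by
    rw [one_add_div (mul_ne_zero h1b hD)]
    ring
  rw [h1f]
  simp only [f]
  -- `field_simp` only recognises the nonzero denominators once they are atoms
  generalize lam - mu * (a * b) = D at *
  generalize lam - mu * b = D' at *
  generalize lam - mu = d at *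
  field_simp
  ring

end BirthDeath

theorem birthDeath_denom_pos {lam mu E : ℝ} (hmu : 0 ≤ mu) (hlm : mu < lam) (hE : E ≤ 1) :
    0 < lam - mu * E := by
  nlinarith

theorem abs_birthDeath_ratio_lt_one {lam mu E : ℝ} (hmu : 0 ≤ mu) (hlm : mu < lam)
    (hE : E ∈ Ioo (0 : ℝ) 1) :
    |lam * (1 - E) / (lam - mu * E)| < 1 := by
  obtain ⟨hE0, hE1⟩ := hE
  have hD := birthDeath_denom_pos hmu hlm hE1.le
  rw [abs_of_nonneg (div_nonneg (by nlinarith) hD.le), div_lt_one hD]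
  nlinarith

theorem exp_neg_mul_mem_Ioo {c s : ℝ} (hc : 0 < c) (hs : 0 < s) :
    exp (-c * s) ∈ Ioo (0 : ℝ) 1 :=
  ⟨exp_pos _, exp_lt_one_iff.2 (by nlinarith)⟩

theorem hasSum_expected_lineages {lam mu a b : ℝ} (hmu : 0 ≤ mu) (hlm : mu < lam)
    (ha : a ∈ Ioo (0 : ℝ) 1) (hb : b ∈ Ioo (0 : ℝ) 1) :
    let f : ℝ := (lam - mu) * (1 - a) * b / ((1 - b) * (lam - mu * (a * b)))
    HasSum (fun k : ℕ => (1 + ((k : ℝ) + 1) * f) / (1 + f) *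
        (lam ^ k * (lam - mu) * (a * b) * (1 - a * b) ^ k / (lam - mu * (a * b)) ^ (k + 1)))
      (a⁻¹ * (lam - mu * (a * b)) / (lam - mu * b)) := by
  intro f
  obtain ⟨ha0, ha1⟩ := ha
  obtain ⟨hb0, hb1⟩ := hb
  have hE : a * b ∈ Ioo (0 : ℝ) 1 := ⟨mul_pos ha0 hb0, by nlinarith⟩
  have hD := (birthDeath_denom_pos hmu hlm hE.2.le).ne'
  have hr := abs_birthDeath_ratio_lt_one hmu hlm hE
  have hDb := (birthDeath_denom_pos hmu hlm hb1.le).ne'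
  have hmean := (hasSum_affine_mul_geometric (r := lam * (1 - a * b) / (lam - mu * (a * b)))
    hr 1 f).div_const (1 + f)
  rw [one_sub_birthDeath_ratio hD, expected_lineages_closedForm (sub_pos.2 hlm).ne' ha0.ne'
    hb0.ne' (sub_pos.2 hb1).ne' (sub_pos.2 hE.2).ne' hD hDb] at hmean
  have hterm : (fun k : ℕ => (1 + ((k : ℝ) + 1) * f) / (1 + f) *
      (lam ^ k * (lam - mu) * (a * b) * (1 - a * b) ^ k / (lam - mu * (a * b)) ^ (k + 1)))
      = fun k : ℕ => (1 + ((k : ℝ) + 1) * f) * ((lam - mu) * (a * b) / (lam - mu * (a * b))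
        * (lam * (1 - a * b) / (lam - mu * (a * b))) ^ k) / (1 + f) := by
    funext k
    rw [birthDeath_weight_eq_geometric hD, one_sub_birthDeath_ratio hD]
    ring
  rw [hterm]
  exact hmean

theorem nee_ltt_expectation
    (lam mu t sigma : ℝ) (hmu : 0 ≤ mu) (hlm : mu < lam) (ht : 0 < t)
    (hs : sigma ∈ Set.Ioo (0 : ℝ) 1) :
    let f : ℝ := (lam - mu) * (1 - Real.exp (-(lam - mu) * (sigma * t)))
        * Real.exp (-(lam - mu) * ((1 - sigma) * t)) /
      ((1 - Real.exp (-(lam - mu) * ((1 - sigma) * t)))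
        * (lam - mu * Real.exp (-(lam - mu) * t)))
    HasSum (fun k : ℕ =>
      (1 + ((k : ℝ) + 1) * f) / (1 + f) *
        (lam ^ k * (lam - mu) * Real.exp (-(lam - mu) * t)
          * (1 - Real.exp (-(lam - mu) * t)) ^ k
          / (lam - mu * Real.exp (-(lam - mu) * t)) ^ (k + 1)))
      (Real.exp ((lam - mu) * (sigma * t)) *
        (lam - mu * Real.exp (-(lam - mu) * t)) /
        (lam - mu * Real.exp (-(lam - mu) * ((1 - sigma) * t)))) := by
  obtain ⟨hs0, hs1⟩ := hs
  have hd : 0 < lam - mu := sub_pos.2 hlm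
  have hsplit : exp (-(lam - mu) * t)
      = exp (-(lam - mu) * (sigma * t)) * exp (-(lam - mu) * ((1 - sigma) * t)) := by
    rw [← exp_add]
    ring_nf
  have hinv : exp ((lam - mu) * (sigma * t)) = (exp (-(lam - mu) * (sigma * t)))⁻¹ := by
    rw [← exp_neg]
    ring_nf
  simpa only [hsplit, hinv] using hasSum_expected_lineages hmu hlm
    (exp_neg_mul_mem_Ioo hd (mul_pos hs0 ht)) (exp_neg_mul_mem_Ioo hd (by nlinarith))
end

section
/- For λ > μ ≥ 0 with λ > 0 and integer n ≥ 1, the function q(t) = n λ^n (λ-μ)^2 (1 - e^{-(λ-μ)t})^{n-1} e^{-(λ-μ)t} / (λ - μ e^{-(λ-μ)t})^{n+1} is a probability density on (0, ∞), i.e., ∫_0^∞ q(t) dt = 1. -/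
/-! With `r = λ - μ`, the density is the derivative of
`F t = (λ (1 - e^{-r t}) / (λ - μ e^{-r t})) ^ n`, which is `0` at `t = 0` and tends to `1`
as `e^{-r t} → 0`; the fundamental theorem of calculus on `(0, ∞)` does the rest. -/

open MeasureTheory Set Filter Topology Real

section

variable (lam mu : ℝ) (n : ℕ)

noncomputable def originTimeDensity (t : ℝ) : ℝ :=
  n * lam ^ n * (lam - mu) ^ 2 * (1 - exp (-(lam - mu) * t)) ^ (n - 1) * exp (-(lam - mu) * t)
    / (lam - mu * exp (-(lam - mu) * t)) ^ (n + 1)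

noncomputable def originTimeCDF (t : ℝ) : ℝ :=
  (lam * (1 - exp (-(lam - mu) * t)) / (lam - mu * exp (-(lam - mu) * t))) ^ n

variable {lam mu n}

theorem hasDerivAt_mobius {x : ℝ} (hx : lam - mu * x ≠ 0) :
    HasDerivAt (fun x => lam * (1 - x) / (lam - mu * x))
      (-(lam * (lam - mu)) / (lam - mu * x) ^ 2) x := by
  have h := (((hasDerivAt_id x).const_sub 1).const_mul lam).div
    (((hasDerivAt_id x).const_mul mu).const_sub lam) hx
  exact h.congr_deriv (by simp only [id]; ring)

theorem hasDerivAt_exp_neg_mul (c t : ℝ) :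
    HasDerivAt (fun t => exp (-c * t)) (-c * exp (-c * t)) t := by
  simpa [mul_comm] using ((hasDerivAt_id t).const_mul (-c)).exp

theorem hasDerivAt_originTimeCDF {t : ℝ} (ht : lam - mu * exp (-(lam - mu) * t) ≠ 0) :
    HasDerivAt (originTimeCDF lam mu n) (originTimeDensity lam mu n t) t := by
  have h := ((hasDerivAt_mobius ht).comp t (hasDerivAt_exp_neg_mul (lam - mu) t)).pow n
  refine h.congr_deriv ?_
  simp only [originTimeDensity, Function.comp_apply, div_pow, mul_pow]
  generalize exp (-(lam - mu) * t) = E at ht ⊢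
  rcases n with _ | n
  · simp
  · simp only [Nat.add_sub_cancel]
    field_simp
    ring

theorem sub_mul_exp_pos (hmu : 0 ≤ mu) (hlm : mu < lam) {t : ℝ} (ht : 0 ≤ t) :
    0 < lam - mu * exp (-(lam - mu) * t) := by
  have : exp (-(lam - mu) * t) ≤ 1 := exp_le_one_iff.mpr (by nlinarith)
  nlinarith

theorem originTimeDensity_nonneg (hmu : 0 ≤ mu) (hlm : mu < lam) {t : ℝ} (ht : 0 ≤ t) :
    0 ≤ originTimeDensity lam mu n t := by
  have hE : exp (-(lam - mu) * t) ≤ 1 := exp_le_one_iff.mpr (by nlinarith)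
  have h1 : 0 ≤ 1 - exp (-(lam - mu) * t) := by linarith
  have hlam : 0 ≤ lam := by linarith
  have := sub_mul_exp_pos hmu hlm ht
  unfold originTimeDensity
  positivity

theorem originTimeCDF_zero (hn : n ≠ 0) : originTimeCDF lam mu n 0 = 0 := by
  simp [originTimeCDF, hn]

theorem tendsto_originTimeCDF_atTop (hlam : lam ≠ 0) (hlm : mu < lam) :
    Tendsto (originTimeCDF lam mu n) atTop (𝓝 1) := by
  have hE : Tendsto (fun t => exp (-(lam - mu) * t)) atTop (𝓝 0) :=
    tendsto_exp_comp_nhds_zero.mpr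
      (tendsto_id.const_mul_atTop_of_neg (by linarith))
  have hφ : ContinuousAt (fun x => (lam * (1 - x) / (lam - mu * x)) ^ n) 0 :=
    ((hasDerivAt_mobius (by simpa using hlam)).continuousAt).pow n
  have := hφ.tendsto.comp hE
  simp only [mul_zero, sub_zero, mul_one, div_self hlam, one_pow] at this
  exact this

end

theorem origin_time_density_integrates_to_one
    (lam mu : ℝ) (n : ℕ) (hmu : 0 ≤ mu) (hlm : mu < lam) (hn : 1 ≤ n) :
    ∫ t in Set.Ioi (0 : ℝ),
      (n : ℝ) * lam ^ n * (lam - mu) ^ 2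
        * (1 - Real.exp (-(lam - mu) * t)) ^ (n - 1) * Real.exp (-(lam - mu) * t)
        / (lam - mu * Real.exp (-(lam - mu) * t)) ^ (n + 1) = 1 := by
  have hlam : 0 < lam := hmu.trans_lt hlm
  have key := integral_Ioi_of_hasDerivAt_of_nonneg'
    (fun t ht => hasDerivAt_originTimeCDF (n := n) (sub_mul_exp_pos hmu hlm ht).ne')
    (fun t ht => originTimeDensity_nonneg hmu hlm (le_of_lt ht))
    (tendsto_originTimeCDF_atTop hlam.ne' hlm)
  rwa [originTimeCDF_zero (by omega), sub_zero] at key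
end
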